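/- (Correctness of Δ-edge anchored clique enumeration) Let R_i be a rule stratum and t ≥ 0. For each rule r ∈ R_i with arity at least 2 in which every body literal has arity at most 2, enumerate all k-cliques in the substitution consistency graph G(r, J_i^t) that are seeded at some edge in ΔE_{i,r}^t, reporting a clique only if its owner (the rank-minimal Δ-edge it contains, under a fixed total order on edges) coincides with the seeding edge, and let H_i^t be the set of heads of the ground rules corresponding to the reported cliques. Then H_i^t = {H(r̄) | r̄ ∈ gr(R_i, J_i^t), B(r̄) ∩ Δ_i^t ≠ ∅}, and consequently Δ_i^{t+1} = H_i^t \ J_i^t. -/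

import Mathlib

namespace Planning

/-- A term is either a variable or an object (constant). -/
inductive Term (V O : Type) : Type
  | var : V → Term V O
  | obj : O → Term V O
  deriving DecidableEq

/-- An atom is a predicate symbol applied to a list of terms. -/
structure Atom (P V O : Type) : Type where
  pred : P
  args : List (Term V O)

variable {P V O : Type}

def Term.isObj : Term V O → Prop
  | .var _ => False
  | .obj _ => True

/-- A ground atom mentions no variables. -/
def Atom.isGround (a : Atom P V O) : Prop := ∀ t ∈ a.args, t.isObj

/-- The (finite) set of variables occurring in an atom; its card is the arity of the literal. -/
def Atom.vars [DecidableEq V] (a : Atom P V O) : Finset V :=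
  (a.args.filterMap fun t => match t with
    | Term.var v => some v
    | Term.obj _ => none).toFinset

/-- Two terms match iff one of them is a variable, or they are equal objects. -/
def Term.Matches : Term V O → Term V O → Prop
  | .var _, _ => True
  | _, .var _ => True
  | .obj o, .obj o' => o = o'

/-- `P(x_1,...,x_n)` matches `P'(x'_1,...,x'_n)` iff `P = P'` and each pair of
corresponding terms matches. -/
def Atom.Matches (a b : Atom P V O) : Prop :=
  a.pred = b.pred ∧ List.Forall₂ Term.Matches a.args b.args

/-- Apply a partial substitution to a term. -/
def Term.subst (σ : V → Option O) : Term V O → Term V O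
  | .var v => match σ v with
    | some o => .obj o
    | none => .var v
  | .obj o => .obj o

/-- Apply a partial substitution to an atom. -/
def Atom.subst (σ : V → Option O) (a : Atom P V O) : Atom P V O :=
  ⟨a.pred, a.args.map (Term.subst σ)⟩

/-- Apply a total substitution `ρ`, yielding the ground atom `a[ρ]`. -/
def Atom.ground (ρ : V → O) (a : Atom P V O) : Atom P V O :=
  a.subst (fun v => some (ρ v))

/-- The partial substitution `[v, v']` induced by two vertices `v = x/o`, `v' = x'/o'`. -/
def pairSub [DecidableEq V] (v v' : V × O) : V → Option O :=
  fun x => if x = v.1 then some v.2 else if x = v'.1 then some v'.2 else none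

/-- The partial substitution `[v]` induced by a single vertex `v = x/o`. -/
def singleSub [DecidableEq V] (v : V × O) : V → Option O :=
  fun x => if x = v.1 then some v.2 else none

/-- An action schema (also used for the body of a Datalog rule): a finite set of
variables `X(a)`, positive precondition atoms and negative precondition atoms. -/
structure Schema (P V O : Type) : Type where
  vars : Finset V
  prePos : Set (Atom P V O)
  preNeg : Set (Atom P V O)

/-- The arity of a schema is `|X(a)|`. -/
def Schema.arity (a : Schema P V O) : ℕ := a.vars.card

/-- `x/o` is a vertex-consistent substitution: the single-vertex analogue of the
edge removal criteria. -/
def consistentVertex [DecidableEq V] (a : Schema P V O) (s : Set (Atom P V O))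
    (v : V × O) : Prop :=
  v.1 ∈ a.vars ∧
  (∀ p ∈ a.prePos, ∃ q ∈ s, (p.subst (singleSub v)).Matches q) ∧
  (∀ p ∈ a.preNeg, p.subst (singleSub v) ∉ s)

/-- `{v, v'}` is an edge of the substitution consistency graph `G_{a,s}`:
the pair is excluded neither by `I^≠` (two objects for one variable), nor by `I^+`
(some positive precondition atom, after applying `[v,v']`, matches no ground atom
of `s`), nor by `I^-` (some negative precondition atom, after applying `[v,v']`,
yields a ground atom contained in `s`). -/
def consistentEdge [DecidableEq V] (a : Schema P V O) (s : Set (Atom P V O))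
    (v v' : V × O) : Prop :=
  v.1 ∈ a.vars ∧ v'.1 ∈ a.vars ∧
  (v.1 = v'.1 → v.2 = v'.2) ∧
  (∀ p ∈ a.prePos, ∃ q ∈ s, (p.subst (pairSub v v')).Matches q) ∧
  (∀ p ∈ a.preNeg, p.subst (pairSub v v') ∉ s)

/-- The vertex set `{x/ρ(x) | x ∈ X(a)}` (exactly one vertex per variable of `a`)
is a `k`-clique of the substitution consistency graph `G_{a,s}`. -/
def IsCliqueOf [DecidableEq V] (a : Schema P V O) (s : Set (Atom P V O))
    (ρ : V → O) : Prop :=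
  ∀ x ∈ a.vars, ∀ x' ∈ a.vars, x ≠ x' → consistentEdge a s (x, ρ x) (x', ρ x')

/-- All ground precondition (resp. body) literals obtained by applying `ρ` hold in `s`:
positive ground atoms are in `s`, negative ground atoms are not in `s`. -/
def Applicable (a : Schema P V O) (s : Set (Atom P V O)) (ρ : V → O) : Prop :=
  (∀ p ∈ a.prePos, p.ground ρ ∈ s) ∧ (∀ p ∈ a.preNeg, p.ground ρ ∉ s)

/-- A Datalog rule: a head atom and a body (a set of positive and negative literals
over the rule's variables). -/
structure Rule (P V O : Type) : Type where
  head : Atom P V O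
  body : Schema P V O

end Planning

namespace Planning

/-- `e` is a Δ-edge of the clique `C(r̄) = {x/ρ(x) | x ∈ X(r)}`: an edge between
two distinct vertices of the clique that is present in `G(r, Jnew)` but absent
from `G(r, Jold)`, i.e. belongs to `ΔE_{i,r}^t`. -/
def CliqueDeltaEdge {P V O : Type} [DecidableEq V]
    (r : Rule P V O) (Jold Jnew : Set (Atom P V O)) (ρ : V → O)
    (e : (V × O) × (V × O)) : Prop :=
  ∃ x ∈ r.body.vars, ∃ x' ∈ r.body.vars, x ≠ x' ∧
    e = ((x, ρ x), (x', ρ x')) ∧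
    consistentEdge r.body Jnew (x, ρ x) (x', ρ x') ∧
    ¬ consistentEdge r.body Jold (x, ρ x) (x', ρ x')

end Planning

/-!
For a rule with at least two variables whose body literals each mention at most two of them,
every body literal is fully instantiated by some edge `{x/ρ(x), x'/ρ(x')}` of the candidate
clique of a total substitution `ρ`. Hence, over a set of ground facts, `ρ` is a clique of
`G(r, J)` exactly when `r[ρ]` is applicable in `J`. An edge of that clique can be missing from
`G(r, J_i^{t-1})` only because of a positive body atom in `Δ_i^t`, and the edge instantiating
such an atom is indeed missing; so the clique has a Δ-edge iff `B(r[ρ]) ∩ Δ_i^t ≠ ∅`. A clique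
has finitely many edges, so if it has a Δ-edge it has a rank-minimal one and is reported.
-/

theorem Set.Finite.exists_forall_rel {α : Type*} {r : α → α → Prop} [IsTrans α r]
    [Std.Total r] {s : Set α} (hs : s.Finite) (hne : s.Nonempty) :
    ∃ a ∈ s, ∀ b ∈ s, r a b := by
  have := hs.fintype
  have := hne.to_subtype
  obtain ⟨a, ha⟩ := (Std.Total.directed (r := Function.swap r) ((↑) : s → α)).finset_le
    Finset.univ
  exact ⟨a, a.2, fun b hb => ha ⟨b, hb⟩ (Finset.mem_univ _)⟩

theorem Finset.exists_ne_subset_pair {α : Type*} [DecidableEq α] {s t : Finset α}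
    (hs : 2 ≤ s.card) (hts : t ⊆ s) (ht : t.card ≤ 2) :
    ∃ x ∈ s, ∃ x' ∈ s, x ≠ x' ∧ t ⊆ {x, x'} := by
  interval_cases h : t.card
  · obtain ⟨a, ha, b, hb, hab⟩ := Finset.one_lt_card.mp hs
    exact ⟨a, ha, b, hb, hab, by simp [Finset.card_eq_zero.mp h]⟩
  · obtain ⟨a, rfl⟩ := Finset.card_eq_one.mp h
    obtain ⟨b, hb, hba⟩ := Finset.exists_mem_ne hs a
    exact ⟨a, hts (by simp), b, hb, hba.symm, by simp⟩
  · obtain ⟨a, b, hab, rfl⟩ := Finset.card_eq_two.mp h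
    exact ⟨a, hts (by simp), b, hts (by simp), hab, subset_rfl⟩

namespace Planning

variable {P V O : Type}

theorem Term.eq_of_matches {t u : Term V O} (ht : t.isObj) (hu : u.isObj)
    (h : t.Matches u) : t = u := by
  cases t <;> cases u <;> simp_all [Term.Matches, Term.isObj]

theorem Atom.eq_of_matches {a b : Atom P V O} (ha : a.isGround) (hb : b.isGround)
    (h : a.Matches b) : a = b := by
  obtain ⟨pred, args⟩ := a
  obtain ⟨pred', args'⟩ := b
  obtain ⟨rfl, hargs⟩ := h
  simp only [Atom.isGround] at ha hb hargs
  simp only [Atom.mk.injEq, true_and]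
  induction hargs with
  | nil => rfl
  | cons htu _ ih =>
    simp only [List.mem_cons, forall_eq_or_imp] at ha hb
    rw [Term.eq_of_matches ha.1 hb.1 htu, ih ha.2 hb.2]

theorem Atom.ground_isGround (a : Atom P V O) (ρ : V → O) : (a.ground ρ).isGround := by
  simp only [Atom.isGround, Atom.ground, Atom.subst, List.mem_map]
  rintro _ ⟨t, -, rfl⟩
  cases t <;> simp [Term.subst, Term.isObj]

def IsRestrictionOf (σ : V → Option O) (ρ : V → O) : Prop :=
  ∀ x, σ x = none ∨ σ x = some (ρ x)

section Substitution

variable {σ : V → Option O} {ρ : V → O}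

theorem Atom.subst_matches_ground (hσ : IsRestrictionOf σ ρ) (p : Atom P V O) :
    (p.subst σ).Matches (p.ground ρ) := by
  refine ⟨rfl, ?_⟩
  simp only [Atom.ground, Atom.subst, List.forall₂_map_right_iff, List.forall₂_map_left_iff]
  refine List.forall₂_same.mpr fun t _ => ?_
  cases t with
  | var x => rcases hσ x with hx | hx <;> simp [Term.subst, hx, Term.Matches]
  | obj o => simp [Term.subst, Term.Matches]

variable [DecidableEq V]

theorem Atom.mem_vars {a : Atom P V O} {x : V} : x ∈ a.vars ↔ Term.var x ∈ a.args := by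
  simp only [Atom.vars, List.mem_toFinset, List.mem_filterMap]
  constructor
  · rintro ⟨t, ht, he⟩
    cases t <;> simp_all
  · exact fun h => ⟨_, h, rfl⟩

theorem Atom.subst_eq_ground {p : Atom P V O} (h : ∀ x ∈ p.vars, σ x = some (ρ x)) :
    p.subst σ = p.ground ρ := by
  simp only [Atom.ground, Atom.subst, Atom.mk.injEq, true_and]
  refine List.map_congr_left fun t ht => ?_
  cases t with
  | var x => simp [Term.subst, h x (Atom.mem_vars.mpr ht)]
  | obj o => rfl

theorem Atom.subst_eq_ground_or_not_isGround (hσ : IsRestrictionOf σ ρ) (p : Atom P V O) :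
    p.subst σ = p.ground ρ ∨ ¬ (p.subst σ).isGround := by
  by_cases h : ∃ x ∈ p.vars, σ x = none
  · obtain ⟨x, hx, hσx⟩ := h
    refine Or.inr fun hpσ => ?_
    have := hpσ _ (List.mem_map_of_mem (Atom.mem_vars.mp hx))
    simp [Term.subst, hσx, Term.isObj] at this
  · exact Or.inl (Atom.subst_eq_ground fun x hx => (hσ x).resolve_left fun h0 => h ⟨x, hx, h0⟩)

end Substitution

section PairSubstitution

variable [DecidableEq V] (ρ : V → O) (x x' : V)

theorem isRestrictionOf_pairSub : IsRestrictionOf (pairSub (x, ρ x) (x', ρ x')) ρ := by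
  intro y
  unfold pairSub
  split_ifs with h h' <;> simp_all

theorem pairSub_eq_some {y : V} (hy : y ∈ ({x, x'} : Finset V)) :
    pairSub (x, ρ x) (x', ρ x') y = some (ρ y) := by
  simp only [Finset.mem_insert, Finset.mem_singleton] at hy
  unfold pairSub
  split_ifs <;> simp_all

theorem Atom.pairSub_eq_ground {p : Atom P V O} (hp : p.vars ⊆ {x, x'}) :
    p.subst (pairSub (x, ρ x) (x', ρ x')) = p.ground ρ :=
  Atom.subst_eq_ground fun _ hy => pairSub_eq_some ρ x x' (hp hy)

end PairSubstitution

section Cliques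

variable [DecidableEq V]

def Schema.LiteralsCoveredByPairs (a : Schema P V O) : Prop :=
  ∀ p ∈ a.prePos ∪ a.preNeg, ∃ x ∈ a.vars, ∃ x' ∈ a.vars, x ≠ x' ∧ p.vars ⊆ {x, x'}

theorem Schema.literalsCoveredByPairs {a : Schema P V O}
    (hvars : ∀ p ∈ a.prePos ∪ a.preNeg, p.vars ⊆ a.vars) (harity : 2 ≤ a.arity)
    (hliteral : ∀ p ∈ a.prePos ∪ a.preNeg, p.vars.card ≤ 2) : a.LiteralsCoveredByPairs :=
  fun p hp => Finset.exists_ne_subset_pair harity (hvars p hp) (hliteral p hp)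

variable {a : Schema P V O} {s : Set (Atom P V O)} {ρ : V → O}

theorem consistentEdge_of_applicable (hground : ∀ q ∈ s, q.isGround)
    (happ : Applicable a s ρ) {x x' : V} (hx : x ∈ a.vars) (hx' : x' ∈ a.vars)
    (hne : x ≠ x') : consistentEdge a s (x, ρ x) (x', ρ x') := by
  refine ⟨hx, hx', fun h => absurd h hne, fun p hp => ?_, fun p hp hmem => ?_⟩
  · exact ⟨p.ground ρ, happ.1 p hp, Atom.subst_matches_ground (isRestrictionOf_pairSub ρ x x') p⟩
  · rcases Atom.subst_eq_ground_or_not_isGround (isRestrictionOf_pairSub ρ x x') p with h | h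
    · exact happ.2 p hp (h ▸ hmem)
    · exact h (hground _ hmem)

theorem applicable_of_isCliqueOf (hground : ∀ q ∈ s, q.isGround)
    (hcov : a.LiteralsCoveredByPairs) (hclique : IsCliqueOf a s ρ) : Applicable a s ρ := by
  constructor
  · intro p hp
    obtain ⟨x, hx, x', hx', hne, hpx⟩ := hcov p (Or.inl hp)
    obtain ⟨q, hq, hmatch⟩ := (hclique x hx x' hx' hne).2.2.2.1 p hp
    rw [Atom.pairSub_eq_ground ρ x x' hpx] at hmatch
    rwa [Atom.eq_of_matches (p.ground_isGround ρ) (hground q hq) hmatch]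
  · intro p hp
    obtain ⟨x, hx, x', hx', hne, hpx⟩ := hcov p (Or.inr hp)
    simpa only [Atom.pairSub_eq_ground ρ x x' hpx] using
      (hclique x hx x' hx' hne).2.2.2.2 p hp

theorem isCliqueOf_iff_applicable (hground : ∀ q ∈ s, q.isGround)
    (hcov : a.LiteralsCoveredByPairs) : IsCliqueOf a s ρ ↔ Applicable a s ρ :=
  ⟨applicable_of_isCliqueOf hground hcov,
    fun happ _ hx _ hx' hne => consistentEdge_of_applicable hground happ hx hx' hne⟩

end Cliques

section DeltaEdges

variable [DecidableEq V] {r : Rule P V O} {Jold Jnew : Set (Atom P V O)} {ρ : V → O}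

theorem CliqueDeltaEdge.exists_prePos_ground_mem_diff (hsub : Jold ⊆ Jnew)
    (happ : Applicable r.body Jnew ρ) {e : (V × O) × (V × O)}
    (he : CliqueDeltaEdge r Jold Jnew ρ e) :
    ∃ p ∈ r.body.prePos, p.ground ρ ∈ Jnew \ Jold := by
  obtain ⟨x, hx, x', hx', hne, -, hnew, hold⟩ := he
  by_contra! hno
  refine hold ⟨hx, hx', fun h => absurd h hne, fun p hp => ?_, fun p hp hmem => ?_⟩
  · refine ⟨p.ground ρ, ?_, Atom.subst_matches_ground (isRestrictionOf_pairSub ρ x x') p⟩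
    by_contra hp'
    exact hno p hp ⟨happ.1 p hp, hp'⟩
  · exact hnew.2.2.2.2 p hp (hsub hmem)

theorem exists_cliqueDeltaEdge_of_prePos_ground_mem_diff (hsub : Jold ⊆ Jnew)
    (hground : ∀ q ∈ Jnew, q.isGround) (hcov : r.body.LiteralsCoveredByPairs)
    (hclique : IsCliqueOf r.body Jnew ρ) {p : Atom P V O} (hp : p ∈ r.body.prePos)
    (hmem : p.ground ρ ∈ Jnew \ Jold) : ∃ e, CliqueDeltaEdge r Jold Jnew ρ e := by
  obtain ⟨x, hx, x', hx', hne, hpx⟩ := hcov p (Or.inl hp)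
  refine ⟨_, x, hx, x', hx', hne, rfl, hclique x hx x' hx' hne, fun hold => hmem.2 ?_⟩
  obtain ⟨q, hq, hmatch⟩ := hold.2.2.2.1 p hp
  rw [Atom.pairSub_eq_ground ρ x x' hpx] at hmatch
  rwa [Atom.eq_of_matches (p.ground_isGround ρ) (hground q (hsub hq)) hmatch]

theorem isCliqueOf_and_exists_cliqueDeltaEdge_iff (hsub : Jold ⊆ Jnew)
    (hground : ∀ q ∈ Jnew, q.isGround) (hcov : r.body.LiteralsCoveredByPairs) :
    (IsCliqueOf r.body Jnew ρ ∧ ∃ e, CliqueDeltaEdge r Jold Jnew ρ e) ↔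
      Applicable r.body Jnew ρ ∧ ∃ p ∈ r.body.prePos, p.ground ρ ∈ Jnew \ Jold := by
  rw [isCliqueOf_iff_applicable hground hcov]
  refine ⟨fun ⟨happ, _, he⟩ => ⟨happ, he.exists_prePos_ground_mem_diff hsub happ⟩,
    fun ⟨happ, p, hp, hmem⟩ => ⟨happ, ?_⟩⟩
  exact exists_cliqueDeltaEdge_of_prePos_ground_mem_diff hsub hground hcov
    ((isCliqueOf_iff_applicable hground hcov).mpr happ) hp hmem

theorem finite_setOf_cliqueDeltaEdge :
    {e | CliqueDeltaEdge r Jold Jnew ρ e}.Finite := by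
  refine ((r.body.vars ×ˢ r.body.vars).finite_toSet.image
    fun q => ((q.1, ρ q.1), (q.2, ρ q.2))).subset ?_
  rintro _ ⟨x, hx, x', hx', -, rfl, -⟩
  exact ⟨(x, x'), by simp [hx, hx'], rfl⟩

theorem exists_min_cliqueDeltaEdge_iff
    {rank : (V × O) × (V × O) → (V × O) × (V × O) → Prop} [IsTrans _ rank] [Std.Total rank] :
    (∃ e, CliqueDeltaEdge r Jold Jnew ρ e ∧
        ∀ e', CliqueDeltaEdge r Jold Jnew ρ e' → rank e e') ↔
      ∃ e, CliqueDeltaEdge r Jold Jnew ρ e :=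
  ⟨fun ⟨e, he, _⟩ => ⟨e, he⟩, fun hne => finite_setOf_cliqueDeltaEdge.exists_forall_rel hne⟩

end DeltaEdges

end Planning

open Planning in
/-- Correctness of Δ-edge anchored clique enumeration,
Theorem 2 of the paper. Let `Jold = J_i^{t-1} ⊆ Jnew = J_i^t` (so
`Δ_i^t = Jnew \ Jold`), and let `Ri` be a rule stratum in which every rule has
arity at least `2` and every body literal has arity at most `2`. Enumerate, for
each rule `r ∈ Ri`, all `k`-cliques of `G(r, J_i^t)` seeded at some edge of
`ΔE_{i,r}^t`, reporting a clique only if its owner — its rank-minimal Δ-edge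
under the fixed total order `rank` — coincides with the seeding edge, and let
`H` be the set of heads of the ground rules corresponding to the reported
cliques. Then `H = {H(r̄) | r̄ ∈ gr(Ri, J_i^t), B(r̄) ∩ Δ_i^t ≠ ∅}` and
consequently `Δ_i^{t+1} = H \ J_i^t`. -/
theorem correctness_of_delta_edge_anchored_enumeration
    {P V O : Type} [DecidableEq V]
    (Ri : Set (Rule P V O)) (Jold Jnew : Set (Atom P V O))
    (hsub : Jold ⊆ Jnew)
    (hground : ∀ q ∈ Jnew, q.isGround)
    (hbodyvars : ∀ r ∈ Ri, ∀ p ∈ r.body.prePos ∪ r.body.preNeg, p.vars ⊆ r.body.vars)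
    (hk : ∀ r ∈ Ri, 2 ≤ r.body.arity)
    (harity : ∀ r ∈ Ri, ∀ p ∈ r.body.prePos ∪ r.body.preNeg, p.vars.card ≤ 2)
    (rank : ((V × O) × (V × O)) → ((V × O) × (V × O)) → Prop)
    (hrank : IsLinearOrder ((V × O) × (V × O)) rank)
    (H Δnext : Set (Atom P V O))
    -- `H`: heads of ground rules of reported cliques (clique with a Δ-edge owner
    -- coinciding with some seeding Δ-edge, i.e. with a rank-minimal Δ-edge).
    (hH : H = { h | ∃ r ∈ Ri, ∃ ρ : V → O, IsCliqueOf r.body Jnew ρ ∧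
        (∃ e, CliqueDeltaEdge r Jold Jnew ρ e ∧
          ∀ e', CliqueDeltaEdge r Jold Jnew ρ e' → rank e e') ∧
        h = r.head.ground ρ })
    -- `Δ_i^{t+1}` as defined by semi-naive evaluation.
    (hΔnext : Δnext = { h | ∃ r ∈ Ri, ∃ ρ : V → O, Applicable r.body Jnew ρ ∧
        (∃ p ∈ r.body.prePos, p.ground ρ ∈ Jnew \ Jold) ∧
        h = r.head.ground ρ } \ Jnew) :
    H = { h | ∃ r ∈ Ri, ∃ ρ : V → O, Applicable r.body Jnew ρ ∧
        (∃ p ∈ r.body.prePos, p.ground ρ ∈ Jnew \ Jold) ∧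
        h = r.head.ground ρ } ∧
    Δnext = H \ Jnew := by
  have hheads : H = { h | ∃ r ∈ Ri, ∃ ρ : V → O, Applicable r.body Jnew ρ ∧
      (∃ p ∈ r.body.prePos, p.ground ρ ∈ Jnew \ Jold) ∧ h = r.head.ground ρ } := by
    rw [hH]
    ext h
    refine exists_congr fun r => and_congr_right fun hr => exists_congr fun ρ => ?_
    have hcov := Schema.literalsCoveredByPairs (hbodyvars r hr) (hk r hr) (harity r hr)
    rw [exists_min_cliqueDeltaEdge_iff, ← and_assoc,
      isCliqueOf_and_exists_cliqueDeltaEdge_iff hsub hground hcov, and_assoc]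
  exact ⟨hheads, by rw [hΔnext, hheads]⟩
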